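/- Let α ∈ (0,1) and let M be a positive integer, ε = 2^{−M}. Define g_α^M(v) = Σ_{n=M}^∞ 2^{−nα} sin(2^n π v). Then for every v₀ ∈ ℝ and every u ∈ (0, ε), ∫_{v₀−ε}^{v₀+ε} (g_α^M(v) − g_α^M(v−u))² dv = 4ε · Σ_{n≥M} 2^{−2nα} sin²(2^{n−1} π u). -/

import Mathlib

set_option maxHeartbeats 1000000

open Real MeasureTheory

/-- The tail Weierstrass-type series `g_α^M(v) = ∑_{n ≥ M} 2^{-nα} sin(2^n π v)`. -/
noncomputable def weierstrassTail (α : ℝ) (M : ℕ) (v : ℝ) : ℝ :=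
  ∑' n : ℕ, (2 : ℝ) ^ (-((M + n : ℕ) : ℝ) * α) * Real.sin ((2 : ℝ) ^ (M + n) * π * v)

/-- integral of a cosine over a full period vanishes -/
lemma wt_aux_zero (c d a L : ℝ) (hc : c ≠ 0) (k : ℤ) (hk : c * L = k * (2 * π)) :
    ∫ v in a..(a + L), Real.cos (c * v + d) = 0 := by
  rw [intervalIntegral.integral_comp_mul_add Real.cos hc d]
  have : c * (a + L) + d = (c * a + d) + k * (2 * π) := by rw [← hk]; ring
  simp [this, Real.sin_add_int_mul_two_pi]

lemma wt_pow_mul (M k : ℕ) : (2 : ℝ) ^ (M + k) * (2 : ℝ) ^ (-(M : ℝ)) = 2 ^ k := by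
  have h1 : ((2 : ℝ) ^ (M : ℕ)) * (2 : ℝ) ^ (-(M : ℝ)) = 1 := by
    rw [← Real.rpow_natCast 2 M, ← Real.rpow_add two_pos]
    simp
  rw [pow_add]
  calc (2:ℝ) ^ M * 2 ^ k * (2:ℝ) ^ (-(M:ℝ))
      = ((2:ℝ) ^ M * (2:ℝ) ^ (-(M:ℝ))) * 2 ^ k := by ring
    _ = 2 ^ k := by rw [h1, one_mul]

/-- orthogonality of the cosines over an interval of length `2ε` -/
lemma wt_orth (M : ℕ) (a w ε : ℝ) (hε : ε = (2 : ℝ) ^ (-(M : ℝ))) (m n : ℕ) :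
    ∫ v in a..(a + 2 * ε),
        Real.cos ((2 : ℝ) ^ (M + m) * π * (v - w)) *
          Real.cos ((2 : ℝ) ^ (M + n) * π * (v - w)) =
      if m = n then ε else 0 := by
  have hπ : (π : ℝ) ≠ 0 := Real.pi_ne_zero
  set Pm : ℝ := (2 : ℝ) ^ (M + m) with hPm
  set Pn : ℝ := (2 : ℝ) ^ (M + n) with hPn
  have hkm : Pm * ε = 2 ^ m := by rw [hPm, hε]; exact wt_pow_mul M m
  have hkn : Pn * ε = 2 ^ n := by rw [hPn, hε]; exact wt_pow_mul M n
  have key : ∀ v : ℝ, Real.cos (Pm * π * (v - w)) * Real.cos (Pn * π * (v - w)) =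
      (Real.cos ((Pm + Pn) * π * v + (-((Pm + Pn) * π) * w)) +
        Real.cos ((Pm - Pn) * π * v + (-((Pm - Pn) * π) * w))) / 2 := by
    intro v
    have e1 : (Pm + Pn) * π * v + (-((Pm + Pn) * π) * w) =
        Pm * π * (v - w) + Pn * π * (v - w) := by ring
    have e2 : (Pm - Pn) * π * v + (-((Pm - Pn) * π) * w) =
        Pm * π * (v - w) - Pn * π * (v - w) := by ring
    rw [e1, e2, Real.cos_add, Real.cos_sub]; ring
  simp only [key]
  have hint : ∀ c d : ℝ, IntervalIntegrable (fun v => Real.cos (c * v + d)) volume a (a + 2 * ε) :=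
    fun c d => (Real.continuous_cos.comp (by continuity)).intervalIntegrable _ _
  rw [intervalIntegral.integral_div, intervalIntegral.integral_add (hint _ _) (hint _ _)]
  have hsum : (∫ v in a..(a + 2 * ε),
      Real.cos ((Pm + Pn) * π * v + (-((Pm + Pn) * π) * w))) = 0 := by
    refine wt_aux_zero _ _ _ _ ?_ ((2 : ℤ) ^ m + 2 ^ n) ?_
    · have h0 : (0 : ℝ) < Pm + Pn := by positivity
      exact mul_ne_zero (ne_of_gt h0) hπ
    · push_cast
      calc (Pm + Pn) * π * (2 * ε) = (Pm * ε + Pn * ε) * (2 * π) := by ring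
        _ = ((2:ℝ) ^ m + 2 ^ n) * (2 * π) := by rw [hkm, hkn]
  rw [hsum]
  rcases eq_or_ne m n with h | h
  · subst h
    have hzero : ∀ v : ℝ, (Pm - Pm) * π * v + (-((Pm - Pm) * π) * w) = 0 := by
      intro v; ring
    rw [show Pn = Pm from hPn.trans hPm.symm]
    simp only [hzero, Real.cos_zero, if_pos rfl]
    rw [intervalIntegral.integral_const]
    simp
  · have hdiff : (∫ v in a..(a + 2 * ε),
        Real.cos ((Pm - Pn) * π * v + (-((Pm - Pn) * π) * w))) = 0 := by
      refine wt_aux_zero _ _ _ _ ?_ ((2 : ℤ) ^ m - 2 ^ n) ?_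
      · have hne : Pm ≠ Pn := by
          intro hh
          apply h
          have h1 : ((2 : ℝ)) ^ m = 2 ^ n := by rw [← hkm, ← hkn, hh]
          have h2 : (2:ℕ) ^ m = 2 ^ n := by exact_mod_cast h1
          exact Nat.pow_right_injective (le_refl 2) h2
        exact mul_ne_zero (sub_ne_zero.mpr hne) hπ
      · push_cast
        calc (Pm - Pn) * π * (2 * ε) = (Pm * ε - Pn * ε) * (2 * π) := by ring
          _ = ((2:ℝ) ^ m - 2 ^ n) * (2 * π) := by rw [hkm, hkn]
    rw [hdiff, if_neg h]
    simp

theorem weierstrassTail_integral_identity (α : ℝ) (hα : α ∈ Set.Ioo (0 : ℝ) 1)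
    (M : ℕ) (hM : 1 ≤ M) (ε : ℝ) (hε : ε = (2 : ℝ) ^ (-(M : ℝ)))
    (v₀ u : ℝ) (hu : u ∈ Set.Ioo 0 ε) :
    ∫ v in (v₀ - ε)..(v₀ + ε),
        (weierstrassTail α M v - weierstrassTail α M (v - u)) ^ 2 =
      4 * ε * ∑' n : ℕ,
        (2 : ℝ) ^ (-2 * ((M + n : ℕ) : ℝ) * α) *
          Real.sin ((2 : ℝ) ^ (M + n) * π * u / 2) ^ 2 := by
  obtain ⟨hα0, hα1⟩ := hα
  have hεpos : 0 < ε := by rw [hε]; positivity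
  set a := v₀ - ε with ha
  set b := v₀ + ε with hb
  have hab : a ≤ b := by simp only [ha, hb]; linarith
  have hba : b = a + 2 * ε := by simp only [ha, hb]; ring
  -- the coefficients
  set A : ℕ → ℝ := fun n => (2 : ℝ) ^ (-((M + n : ℕ) : ℝ) * α) with hA
  have hApos : ∀ n, 0 < A n := fun n => Real.rpow_pos_of_pos two_pos _
  -- summability of A
  have hAeq : ∀ n, A n = (2 : ℝ) ^ (-(M : ℝ) * α) * ((2 : ℝ) ^ (-α)) ^ n := by
    intro n
    simp only [hA]
    rw [show (-((M + n : ℕ) : ℝ) * α) = (-(M:ℝ)*α) + (-α) * (n : ℝ) by push_cast; ring]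
    rw [Real.rpow_add two_pos, ← Real.rpow_natCast ((2:ℝ) ^ (-α)) n,
      ← Real.rpow_mul (by norm_num : (0:ℝ) ≤ 2)]
  have hr1 : (2 : ℝ) ^ (-α) < 1 := by
    rw [← Real.rpow_zero 2]
    exact Real.rpow_lt_rpow_of_exponent_lt one_lt_two (by linarith)
  have hr0 : (0 : ℝ) ≤ (2 : ℝ) ^ (-α) := (Real.rpow_pos_of_pos two_pos _).le
  have hAsum : Summable A := by
    apply Summable.congr (((summable_geometric_of_lt_one hr0 hr1).mul_left _))
    intro n
    exact (hAeq n).symm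
  -- c and g
  set c : ℕ → ℝ := fun n => 2 * A n * Real.sin ((2 : ℝ) ^ (M + n) * π * u / 2) with hc
  set g : ℕ → ℝ → ℝ := fun n v => c n * Real.cos ((2 : ℝ) ^ (M + n) * π * (v - u / 2)) with hg
  have hcabs : ∀ n, |c n| ≤ 2 * A n := by
    intro n
    rw [hc]
    calc |2 * A n * Real.sin ((2:ℝ) ^ (M + n) * π * u / 2)|
        = 2 * A n * |Real.sin ((2:ℝ) ^ (M + n) * π * u / 2)| := by
          rw [abs_mul, abs_of_nonneg (by positivity : (0:ℝ) ≤ 2 * A n)]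
      _ ≤ 2 * A n * 1 := by
          gcongr
          exact Real.abs_sin_le_one _
      _ = 2 * A n := mul_one _
  have hcsum : Summable fun n => |c n| :=
    Summable.of_nonneg_of_le (fun n => abs_nonneg _) hcabs (hAsum.mul_left 2)
  have hcsum' : Summable c := hcsum.of_abs
  set K : ℝ := ∑' n, |c n| with hK
  have hgabs : ∀ n v, |g n v| ≤ |c n| := by
    intro n v
    rw [hg]
    calc |c n * Real.cos ((2:ℝ) ^ (M + n) * π * (v - u / 2))|
        = |c n| * |Real.cos ((2:ℝ) ^ (M + n) * π * (v - u / 2))| := abs_mul _ _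
      _ ≤ |c n| * 1 := by gcongr; exact Real.abs_cos_le_one _
      _ = |c n| := mul_one _
  have hgsum : ∀ v, Summable fun n => g n v := fun v =>
    (Summable.of_nonneg_of_le (fun n => abs_nonneg _) (fun n => hgabs n v) hcsum).of_abs
  -- pointwise identity
  have step1 : ∀ v : ℝ, weierstrassTail α M v - weierstrassTail α M (v - u) = ∑' n, g n v := by
    intro v
    have hs : ∀ w : ℝ,
        Summable fun n => A n * Real.sin ((2 : ℝ) ^ (M + n) * π * w) := by
      intro w
      apply Summable.of_abs
      apply Summable.of_nonneg_of_le (fun n => abs_nonneg _) _ hAsum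
      intro n
      rw [abs_mul, abs_of_pos (hApos n)]
      calc A n * |Real.sin ((2:ℝ) ^ (M + n) * π * w)| ≤ A n * 1 := by
            gcongr; exact Real.abs_sin_le_one _
        _ = A n := mul_one _
    rw [weierstrassTail, weierstrassTail, ← Summable.tsum_sub (hs v) (hs (v - u))]
    apply tsum_congr
    intro n
    have e0 : A n * Real.sin ((2:ℝ) ^ (M + n) * π * v)
        - A n * Real.sin ((2:ℝ) ^ (M + n) * π * (v - u))
        = A n * (Real.sin ((2:ℝ) ^ (M + n) * π * v)
          - Real.sin ((2:ℝ) ^ (M + n) * π * (v - u))) := by ring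
    rw [e0, Real.sin_sub_sin]
    have e1 : ((2:ℝ) ^ (M + n) * π * v - (2:ℝ) ^ (M + n) * π * (v - u)) / 2
        = (2:ℝ) ^ (M + n) * π * u / 2 := by ring
    have e2 : ((2:ℝ) ^ (M + n) * π * v + (2:ℝ) ^ (M + n) * π * (v - u)) / 2
        = (2:ℝ) ^ (M + n) * π * (v - u / 2) := by ring
    rw [e1, e2, hg, hc]
    ring
  -- continuity of g n
  have hgcont : ∀ n, Continuous (g n) := by
    intro n
    rw [hg]
    exact continuous_const.mul (Real.continuous_cos.comp (by continuity))
  -- integral of partial sums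
  have hSN : ∀ N : ℕ, (∫ v in a..b, (∑ n ∈ Finset.range N, g n v) ^ 2)
      = ∑ n ∈ Finset.range N, (c n) ^ 2 * ε := by
    intro N
    have expand : ∀ v : ℝ, (∑ n ∈ Finset.range N, g n v) ^ 2
        = ∑ m ∈ Finset.range N, ∑ n ∈ Finset.range N,
            (c m * c n) * (Real.cos ((2:ℝ) ^ (M + m) * π * (v - u / 2)) *
              Real.cos ((2:ℝ) ^ (M + n) * π * (v - u / 2))) := by
      intro v
      rw [sq, Finset.sum_mul_sum]
      apply Finset.sum_congr rfl
      intro m _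
      apply Finset.sum_congr rfl
      intro n _
      rw [hg]
      ring
    simp only [expand]
    rw [intervalIntegral.integral_finset_sum]
    · have inner : ∀ m ∈ Finset.range N,
          (∫ v in a..b, ∑ n ∈ Finset.range N,
            (c m * c n) * (Real.cos ((2:ℝ) ^ (M + m) * π * (v - u / 2)) *
              Real.cos ((2:ℝ) ^ (M + n) * π * (v - u / 2))))
          = (c m) ^ 2 * ε := by
        intro m hm
        rw [intervalIntegral.integral_finset_sum]
        · have term : ∀ n ∈ Finset.range N,
              (∫ v in a..b, (c m * c n) * (Real.cos ((2:ℝ) ^ (M + m) * π * (v - u / 2)) *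
                Real.cos ((2:ℝ) ^ (M + n) * π * (v - u / 2))))
              = if m = n then (c m) ^ 2 * ε else 0 := by
            intro n _
            rw [intervalIntegral.integral_const_mul, hba, wt_orth M a (u / 2) ε hε m n]
            rcases eq_or_ne m n with h | h
            · subst h; rw [if_pos rfl, if_pos rfl]; ring
            · rw [if_neg h, if_neg h, mul_zero]
          rw [Finset.sum_congr rfl term, Finset.sum_ite_eq (Finset.range N) m
            (fun _ => (c m) ^ 2 * ε), if_pos hm]
        · intro n _
          exact (continuous_const.mul ((Real.continuous_cos.comp (by continuity)).mul
            (Real.continuous_cos.comp (by continuity)))).intervalIntegrable _ _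
      rw [Finset.sum_congr rfl inner]
    · intro m _
      apply (Continuous.intervalIntegrable ?_ _ _)
      apply continuous_finset_sum
      intro n _
      exact continuous_const.mul ((Real.continuous_cos.comp (by continuity)).mul
        (Real.continuous_cos.comp (by continuity)))
  -- dominated convergence
  have hKbound : ∀ N v, |∑ n ∈ Finset.range N, g n v| ≤ K := by
    intro N v
    calc |∑ n ∈ Finset.range N, g n v| ≤ ∑ n ∈ Finset.range N, |g n v| :=
        Finset.abs_sum_le_sum_abs _ _
      _ ≤ ∑ n ∈ Finset.range N, |c n| :=
        Finset.sum_le_sum (fun n _ => hgabs n v)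
      _ ≤ K := Summable.sum_le_tsum _ (fun n _ => abs_nonneg _) hcsum
  have hDCT : Filter.Tendsto
      (fun N => ∫ v in Set.Ioc a b, (∑ n ∈ Finset.range N, g n v) ^ 2)
      Filter.atTop (nhds (∫ v in Set.Ioc a b, (∑' n, g n v) ^ 2)) := by
    apply MeasureTheory.tendsto_integral_of_dominated_convergence (fun _ => K ^ 2)
    · intro N
      exact ((continuous_finset_sum _ (fun n _ => hgcont n)).pow 2).aestronglyMeasurable
    · exact integrableOn_const measure_Ioc_lt_top.ne
    · intro N
      filter_upwards with v
      rw [Real.norm_eq_abs, abs_pow, sq_abs, ← sq_abs]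
      exact pow_le_pow_left₀ (abs_nonneg _) (hKbound N v) 2
    · filter_upwards with v
      exact ((hgsum v).hasSum.tendsto_sum_nat).pow 2
  -- summability of squares
  have hC : ∀ n, A n ≤ (2 : ℝ) ^ (-(M : ℝ) * α) := by
    intro n
    apply Real.rpow_le_rpow_of_exponent_le one_le_two
    have : (M : ℝ) ≤ ((M + n : ℕ) : ℝ) := by push_cast; linarith [Nat.cast_nonneg (α := ℝ) n]
    nlinarith
  have hsq_sum : Summable fun n => (c n) ^ 2 * ε := by
    apply Summable.of_nonneg_of_le (fun n => by positivity)
      (f := fun n => (4 * (2 : ℝ) ^ (-(M : ℝ) * α) * ε) * A n)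
    · intro n
      calc (c n) ^ 2 * ε = |c n| ^ 2 * ε := by rw [sq_abs]
        _ ≤ (2 * A n) ^ 2 * ε := by
            gcongr
            exact hcabs n
        _ = 4 * (A n * A n) * ε := by ring
        _ ≤ 4 * ((2 : ℝ) ^ (-(M : ℝ) * α) * A n) * ε := by
            have := mul_le_mul_of_nonneg_right (hC n) (hApos n).le
            nlinarith [hεpos.le]
        _ = (4 * (2 : ℝ) ^ (-(M : ℝ) * α) * ε) * A n := by ring
    · exact hAsum.mul_left _
  have hpartial : Filter.Tendsto (fun N => ∑ n ∈ Finset.range N, (c n) ^ 2 * ε)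
      Filter.atTop (nhds (∑' n, (c n) ^ 2 * ε)) :=
    hsq_sum.hasSum.tendsto_sum_nat
  -- combine
  have hmain : (∫ v in Set.Ioc a b, (∑' n, g n v) ^ 2) = ∑' n, (c n) ^ 2 * ε := by
    apply tendsto_nhds_unique _ hpartial
    have : (fun N => ∑ n ∈ Finset.range N, (c n) ^ 2 * ε)
        = fun N => ∫ v in Set.Ioc a b, (∑ n ∈ Finset.range N, g n v) ^ 2 := by
      funext N
      rw [← hSN N, intervalIntegral.integral_of_le hab]
    rw [this]
    exact hDCT
  calc (∫ v in a..b, (weierstrassTail α M v - weierstrassTail α M (v - u)) ^ 2)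
      = ∫ v in a..b, (∑' n, g n v) ^ 2 := by
        apply intervalIntegral.integral_congr
        intro v _
        dsimp only
        rw [step1 v]
    _ = ∫ v in Set.Ioc a b, (∑' n, g n v) ^ 2 := intervalIntegral.integral_of_le hab
    _ = ∑' n, (c n) ^ 2 * ε := hmain
    _ = 4 * ε * ∑' n : ℕ, (2 : ℝ) ^ (-2 * ((M + n : ℕ) : ℝ) * α) *
          Real.sin ((2 : ℝ) ^ (M + n) * π * u / 2) ^ 2 := by
        rw [← tsum_mul_left]
        apply tsum_congr
        intro n
        have hA2 : (A n) ^ 2 = (2 : ℝ) ^ (-2 * ((M + n : ℕ) : ℝ) * α) := by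
          rw [hA, sq, ← Real.rpow_add two_pos]
          congr 1
          ring
        rw [hc]
        calc (2 * A n * Real.sin ((2:ℝ) ^ (M + n) * π * u / 2)) ^ 2 * ε
            = 4 * ε * ((A n) ^ 2 * Real.sin ((2:ℝ) ^ (M + n) * π * u / 2) ^ 2) := by ring
          _ = 4 * ε * ((2 : ℝ) ^ (-2 * ((M + n : ℕ) : ℝ) * α) *
              Real.sin ((2:ℝ) ^ (M + n) * π * u / 2) ^ 2) := by rw [hA2]
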